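/- arXiv:2603.12325 — 2 statements merged into one kernel-verified Lean document; each statement's English description precedes it below -/
import Mathlib

section
/- Let ι be a finite nonempty index type, let M : ι → ι → ℝ have all entries strictly positive, let β ≥ 1, and let τ ≥ 0 be such that d_H(S(x), S(y)) ≤ τ · d_H(x, y) and d_H(M x, M y) ≤ τ · d_H(x, y) for all strictly positive x, y : ι → ℝ, where S(u)_i = ∑_k u_k · M_{k i} and (M u)_j = ∑_i M_{j i} · u_i. Then the EVE operator T satisfies the contraction estimate d_H(T(x), T(y)) ≤ ( (2τ + τ²(β − 1)) / (1 + β) ) · d_H(x, y) for all strictly positive x, y. -/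
open Finset Real

/-- Hilbert projective metric on strictly positive vectors:
`d_H(x,y) = log (max_i x i / y i) - log (min_i x i / y i)`. -/
noncomputable def dH {ι : Type*} [Fintype ι] [Nonempty ι] (x y : ι → ℝ) : ℝ :=
  Real.log (⨆ i, x i / y i) - Real.log (⨅ i, x i / y i)

/-- `S(u) i = ∑ k, u k * M k i`. -/
noncomputable def eveS {ι : Type*} [Fintype ι] (M : ι → ι → ℝ) (u : ι → ℝ) : ι → ℝ :=
  fun i => ∑ k, u k * M k i

/-- The EVE operator
`T(u) j = ( S(u) j ^ (1/β) / (∑ i, M j i * u i ^ (-1/β) * S(u) i ^ ((1-β)/β)) ) ^ (β/(1+β))`,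
where all powers are real powers. -/
noncomputable def eveT {ι : Type*} [Fintype ι] (M : ι → ι → ℝ) (β : ℝ) (u : ι → ℝ) : ι → ℝ :=
  fun j => (eveS M u j ^ (1 / β) /
      ∑ i, M j i * u i ^ (-1 / β) * eveS M u i ^ ((1 - β) / β)) ^ (β / (1 + β))

section Helpers

variable {ι : Type*} [Fintype ι] [Nonempty ι]

lemma exists_sup_eq (f : ι → ℝ) : ∃ i, (⨆ j, f j) = f i ∧ ∀ j, f j ≤ f i := by
  obtain ⟨i, hi⟩ := Finite.exists_max f
  exact ⟨i, le_antisymm (ciSup_le hi) (le_ciSup (Set.finite_range f).bddAbove i), hi⟩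

lemma exists_inf_eq (f : ι → ℝ) : ∃ i, (⨅ j, f j) = f i ∧ ∀ j, f i ≤ f j := by
  obtain ⟨i, hi⟩ := Finite.exists_min f
  exact ⟨i, le_antisymm (ciInf_le (Set.finite_range f).bddBelow i) (le_ciInf hi), hi⟩

lemma sup_pos' {f : ι → ℝ} (hf : ∀ i, 0 < f i) : 0 < ⨆ j, f j := by
  obtain ⟨i, hi, -⟩ := exists_sup_eq f
  rw [hi]; exact hf i

lemma inf_pos' {f : ι → ℝ} (hf : ∀ i, 0 < f i) : 0 < ⨅ j, f j := by
  obtain ⟨i, hi, -⟩ := exists_inf_eq f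
  rw [hi]; exact hf i

lemma dH_congr {x y x' y' : ι → ℝ} (h : ∀ i, x i / y i = x' i / y' i) :
    dH x y = dH x' y' := by
  unfold dH
  simp only [h]

lemma sup_div_inv {x y : ι → ℝ} (hx : ∀ i, 0 < x i) (hy : ∀ i, 0 < y i) :
    (⨆ i, x i / y i) = (⨅ i, y i / x i)⁻¹ := by
  obtain ⟨i, hi, hmin⟩ := exists_inf_eq (fun i => y i / x i)
  have hmax : ∀ j, x j / y j ≤ x i / y i := by
    intro j
    have h2 := (div_le_div_iff₀ (hx i) (hx j)).mp (hmin j)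
    rw [div_le_div_iff₀ (hy j) (hy i)]
    nlinarith
  have hsup : (⨆ j, x j / y j) = x i / y i :=
    le_antisymm (ciSup_le hmax)
      (le_ciSup (f := fun j => x j / y j) (Set.finite_range _).bddAbove i)
  rw [hsup, hi, inv_div]

lemma dH_symm {x y : ι → ℝ} (hx : ∀ i, 0 < x i) (hy : ∀ i, 0 < y i) :
    dH x y = dH y x := by
  have h1 : (⨅ i, x i / y i) = (⨆ i, y i / x i)⁻¹ := by
    rw [sup_div_inv hy hx, inv_inv]
  unfold dH
  rw [sup_div_inv hx hy, h1, Real.log_inv, Real.log_inv]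
  ring

lemma dH_nonneg {x y : ι → ℝ} (hx : ∀ i, 0 < x i) (hy : ∀ i, 0 < y i) :
    0 ≤ dH x y := by
  have h1 : 0 < ⨅ i, x i / y i := inf_pos' fun i => div_pos (hx i) (hy i)
  inhabit ι
  have h2 : (⨅ i, x i / y i) ≤ ⨆ i, x i / y i :=
    le_trans (ciInf_le (f := fun i => x i / y i) (Set.finite_range _).bddBelow default)
      (le_ciSup (f := fun i => x i / y i) (Set.finite_range _).bddAbove default)
  have := Real.log_le_log h1 h2
  simp only [dH]
  linarith

lemma dH_mul {x y z w : ι → ℝ} (hx : ∀ i, 0 < x i) (hy : ∀ i, 0 < y i)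
    (hz : ∀ i, 0 < z i) (hw : ∀ i, 0 < w i) :
    dH (fun i => x i * z i) (fun i => y i * w i) ≤ dH x y + dH z w := by
  have hxy : ∀ i, 0 < x i / y i := fun i => div_pos (hx i) (hy i)
  have hzw : ∀ i, 0 < z i / w i := fun i => div_pos (hz i) (hw i)
  have hS1 : 0 < ⨆ i, x i / y i := sup_pos' hxy
  have hS2 : 0 < ⨆ i, z i / w i := sup_pos' hzw
  have hI1 : 0 < ⨅ i, x i / y i := inf_pos' hxy
  have hI2 : 0 < ⨅ i, z i / w i := inf_pos' hzw
  have hpt : ∀ i, 0 < (x i * z i) / (y i * w i) :=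
    fun i => div_pos (mul_pos (hx i) (hz i)) (mul_pos (hy i) (hw i))
  have hsup : (⨆ i, (x i * z i) / (y i * w i)) ≤ (⨆ i, x i / y i) * (⨆ i, z i / w i) := by
    refine ciSup_le fun i => ?_
    rw [← div_mul_div_comm]
    exact mul_le_mul (le_ciSup (f := fun i => x i / y i) (Set.finite_range _).bddAbove i)
      (le_ciSup (f := fun i => z i / w i) (Set.finite_range _).bddAbove i) (hzw i).le hS1.le
  have hinf : (⨅ i, x i / y i) * (⨅ i, z i / w i) ≤ ⨅ i, (x i * z i) / (y i * w i) := by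
    refine le_ciInf fun i => ?_
    rw [← div_mul_div_comm]
    exact mul_le_mul (ciInf_le (f := fun i => x i / y i) (Set.finite_range _).bddBelow i)
      (ciInf_le (f := fun i => z i / w i) (Set.finite_range _).bddBelow i) hI2.le (hxy i).le
  have l1 : Real.log (⨆ i, (x i * z i) / (y i * w i)) ≤
      Real.log (⨆ i, x i / y i) + Real.log (⨆ i, z i / w i) := by
    rw [← Real.log_mul hS1.ne' hS2.ne']
    exact Real.log_le_log (sup_pos' hpt) hsup
  have l2 : Real.log (⨅ i, x i / y i) + Real.log (⨅ i, z i / w i) ≤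
      Real.log (⨅ i, (x i * z i) / (y i * w i)) := by
    rw [← Real.log_mul hI1.ne' hI2.ne']
    exact Real.log_le_log (mul_pos hI1 hI2) hinf
  simp only [dH]
  linarith

lemma dH_rpow {x y : ι → ℝ} (hx : ∀ i, 0 < x i) (hy : ∀ i, 0 < y i)
    {a : ℝ} (ha : 0 ≤ a) :
    dH (fun i => x i ^ a) (fun i => y i ^ a) = a * dH x y := by
  have hr : ∀ i, (x i ^ a) / (y i ^ a) = (x i / y i) ^ a := fun i =>
    (Real.div_rpow (hx i).le (hy i).le a).symm
  obtain ⟨i, hi, hmax⟩ := exists_sup_eq (fun i => x i / y i)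
  obtain ⟨j, hj, hmin⟩ := exists_inf_eq (fun i => x i / y i)
  have hsup : (⨆ k, (x k ^ a) / (y k ^ a)) = (x i / y i) ^ a := by
    refine le_antisymm (ciSup_le fun k => ?_) ?_
    · rw [hr k]
      exact Real.rpow_le_rpow (div_pos (hx k) (hy k)).le (hmax k) ha
    · rw [← hr i]
      exact le_ciSup (f := fun k => x k ^ a / y k ^ a) (Set.finite_range _).bddAbove i
  have hinf : (⨅ k, (x k ^ a) / (y k ^ a)) = (x j / y j) ^ a := by
    refine le_antisymm ?_ (le_ciInf fun k => ?_)
    · rw [← hr j]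
      exact ciInf_le (f := fun k => x k ^ a / y k ^ a) (Set.finite_range _).bddBelow j
    · rw [hr k]
      exact Real.rpow_le_rpow (div_pos (hx j) (hy j)).le (hmin k) ha
  simp only [dH]
  rw [hsup, hinf, Real.log_rpow (div_pos (hx i) (hy i)),
    Real.log_rpow (div_pos (hx j) (hy j)), hi, hj]
  ring

lemma dH_rpow_neg {x y : ι → ℝ} (hx : ∀ i, 0 < x i) (hy : ∀ i, 0 < y i)
    {a : ℝ} (ha : 0 ≤ a) :
    dH (fun i => x i ^ (-a)) (fun i => y i ^ (-a)) = a * dH x y := by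
  have hr : ∀ i, x i ^ (-a) / y i ^ (-a) = y i ^ a / x i ^ a := by
    intro i
    rw [Real.rpow_neg (hx i).le, Real.rpow_neg (hy i).le, inv_div_inv]
  calc dH (fun i => x i ^ (-a)) (fun i => y i ^ (-a))
      = dH (fun i => y i ^ a) (fun i => x i ^ a) := dH_congr hr
    _ = a * dH y x := dH_rpow hy hx ha
    _ = a * dH x y := by rw [dH_symm hy hx]

lemma dH_div {p q p' q' : ι → ℝ} (hp : ∀ i, 0 < p i) (hq : ∀ i, 0 < q i)
    (hp' : ∀ i, 0 < p' i) (hq' : ∀ i, 0 < q' i) :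
    dH (fun i => p i / q i) (fun i => p' i / q' i) ≤ dH p p' + dH q q' := by
  have h1 : dH (fun i => p i / q i) (fun i => p' i / q' i)
      = dH (fun i => p i * (q i)⁻¹) (fun i => p' i * (q' i)⁻¹) := by
    simp only [div_eq_mul_inv]
  have h2 : dH (fun i => (q i)⁻¹) (fun i => (q' i)⁻¹) = dH q' q := by
    refine dH_congr fun i => ?_
    rw [inv_div_inv]
  rw [h1]
  calc dH (fun i => p i * (q i)⁻¹) (fun i => p' i * (q' i)⁻¹)
      ≤ dH p p' + dH (fun i => (q i)⁻¹) (fun i => (q' i)⁻¹) :=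
        dH_mul hp hp' (fun i => inv_pos.mpr (hq i)) (fun i => inv_pos.mpr (hq' i))
    _ = dH p p' + dH q q' := by rw [h2, dH_symm hq' hq]

end Helpers

/-- if both `S` and `u ↦ M u` are `τ`-contractions in the Hilbert projective
metric on strictly positive vectors, then for `β ≥ 1` the EVE operator `T` satisfies
`d_H(T(x), T(y)) ≤ ((2τ + τ²(β-1))/(1+β)) * d_H(x, y)`. -/
theorem eveT_contraction {ι : Type*} [Fintype ι] [Nonempty ι]
    (M : ι → ι → ℝ) (hM : ∀ i j, 0 < M i j)
    (β : ℝ) (hβ : 1 ≤ β) (τ : ℝ) (hτ : 0 ≤ τ)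
    (hS : ∀ x y : ι → ℝ, (∀ i, 0 < x i) → (∀ i, 0 < y i) →
      dH (eveS M x) (eveS M y) ≤ τ * dH x y)
    (hMap : ∀ x y : ι → ℝ, (∀ i, 0 < x i) → (∀ i, 0 < y i) →
      dH (fun j => ∑ i, M j i * x i) (fun j => ∑ i, M j i * y i) ≤ τ * dH x y) :
    ∀ x y : ι → ℝ, (∀ i, 0 < x i) → (∀ i, 0 < y i) →
      dH (eveT M β x) (eveT M β y) ≤
        ((2 * τ + τ ^ 2 * (β - 1)) / (1 + β)) * dH x y := by
  intro x y hx hy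
  have hβ0 : (0:ℝ) < β := lt_of_lt_of_le one_pos hβ
  have h1β : (0:ℝ) < 1 + β := by linarith
  set d := dH x y with hd
  have hd0 : 0 ≤ d := dH_nonneg hx hy
  have hSx : ∀ i, 0 < eveS M x i := fun i =>
    Finset.sum_pos (fun k _ => mul_pos (hx k) (hM k i)) Finset.univ_nonempty
  have hSy : ∀ i, 0 < eveS M y i := fun i =>
    Finset.sum_pos (fun k _ => mul_pos (hy k) (hM k i)) Finset.univ_nonempty
  set wx : ι → ℝ := fun i => x i ^ (-1/β) * eveS M x i ^ ((1-β)/β) with hwx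
  set wy : ι → ℝ := fun i => y i ^ (-1/β) * eveS M y i ^ ((1-β)/β) with hwy
  have hwxp : ∀ i, 0 < wx i := fun i =>
    mul_pos (Real.rpow_pos_of_pos (hx i) _) (Real.rpow_pos_of_pos (hSx i) _)
  have hwyp : ∀ i, 0 < wy i := fun i =>
    mul_pos (Real.rpow_pos_of_pos (hy i) _) (Real.rpow_pos_of_pos (hSy i) _)
  set Ax : ι → ℝ := fun j => ∑ i, M j i * wx i with hAx
  set Ay : ι → ℝ := fun j => ∑ i, M j i * wy i with hAy
  have hAxp : ∀ j, 0 < Ax j := fun j =>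
    Finset.sum_pos (fun i _ => mul_pos (hM j i) (hwxp i)) Finset.univ_nonempty
  have hAyp : ∀ j, 0 < Ay j := fun j =>
    Finset.sum_pos (fun i _ => mul_pos (hM j i) (hwyp i)) Finset.univ_nonempty
  have hTx : eveT M β x = fun j => (eveS M x j ^ (1/β) / Ax j) ^ (β/(1+β)) := by
    funext j
    simp only [eveT, hAx, hwx, mul_assoc]
  have hTy : eveT M β y = fun j => (eveS M y j ^ (1/β) / Ay j) ^ (β/(1+β)) := by
    funext j
    simp only [eveT, hAy, hwy, mul_assoc]
  have hRx : ∀ j, 0 < eveS M x j ^ (1/β) / Ax j := fun j =>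
    div_pos (Real.rpow_pos_of_pos (hSx j) _) (hAxp j)
  have hRy : ∀ j, 0 < eveS M y j ^ (1/β) / Ay j := fun j =>
    div_pos (Real.rpow_pos_of_pos (hSy j) _) (hAyp j)
  -- Key bounds
  have hSbound : dH (eveS M x) (eveS M y) ≤ τ * d := hS x y hx hy
  -- bound on w
  have hstep6 : dH (fun i => x i ^ (-1/β)) (fun i => y i ^ (-1/β)) = (1/β) * d := by
    simp only [neg_div]
    exact dH_rpow_neg hx hy (by positivity)
  have hstep7 : dH (fun i => eveS M x i ^ ((1-β)/β)) (fun i => eveS M y i ^ ((1-β)/β))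
      = ((β-1)/β) * dH (eveS M x) (eveS M y) := by
    have he : (1-β)/β = -((β-1)/β) := by ring
    simp only [he]
    exact dH_rpow_neg hSx hSy (div_nonneg (by linarith) hβ0.le)
  have hw_bound : dH wx wy ≤ (1/β) * d + ((β-1)/β) * (τ * d) := by
    have h1 : dH wx wy ≤ dH (fun i => x i ^ (-1/β)) (fun i => y i ^ (-1/β)) +
        dH (fun i => eveS M x i ^ ((1-β)/β)) (fun i => eveS M y i ^ ((1-β)/β)) :=
      dH_mul (fun i => Real.rpow_pos_of_pos (hx i) _)
        (fun i => Real.rpow_pos_of_pos (hy i) _)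
        (fun i => Real.rpow_pos_of_pos (hSx i) _)
        (fun i => Real.rpow_pos_of_pos (hSy i) _)
    rw [hstep6, hstep7] at h1
    have h2 : ((β-1)/β) * dH (eveS M x) (eveS M y) ≤ ((β-1)/β) * (τ * d) :=
      mul_le_mul_of_nonneg_left hSbound (div_nonneg (by linarith) hβ0.le)
    linarith
  have hA_bound : dH Ax Ay ≤ τ * ((1/β) * d + ((β-1)/β) * (τ * d)) :=
    le_trans (hMap wx wy hwxp hwyp) (mul_le_mul_of_nonneg_left hw_bound hτ)
  have hSr_bound : dH (fun j => eveS M x j ^ (1/β)) (fun j => eveS M y j ^ (1/β))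
      ≤ (1/β) * (τ * d) := by
    rw [dH_rpow hSx hSy (by positivity)]
    exact mul_le_mul_of_nonneg_left hSbound (by positivity)
  have hD : dH (fun j => eveS M x j ^ (1/β) / Ax j) (fun j => eveS M y j ^ (1/β) / Ay j)
      ≤ (1/β) * (τ * d) + τ * ((1/β) * d + ((β-1)/β) * (τ * d)) := by
    have h1 := dH_div (fun j => Real.rpow_pos_of_pos (hSx j) (1/β)) hAxp
      (fun j => Real.rpow_pos_of_pos (hSy j) (1/β)) hAyp
    linarith
  have hmain : dH (eveT M β x) (eveT M β y) =
      (β/(1+β)) * dH (fun j => eveS M x j ^ (1/β) / Ax j)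
        (fun j => eveS M y j ^ (1/β) / Ay j) := by
    rw [hTx, hTy]
    exact dH_rpow hRx hRy (by positivity)
  rw [hmain]
  calc (β/(1+β)) * dH (fun j => eveS M x j ^ (1/β) / Ax j)
        (fun j => eveS M y j ^ (1/β) / Ay j)
      ≤ (β/(1+β)) * ((1/β) * (τ * d) + τ * ((1/β) * d + ((β-1)/β) * (τ * d))) :=
        mul_le_mul_of_nonneg_left hD (by positivity)
    _ = ((2 * τ + τ ^ 2 * (β - 1)) / (1 + β)) * d := by
        field_simp
        ring
end

section
/- Let ι be a finite nonempty index type and let x, y, u, w : ι → ℝ be strictly positive vectors. Then the entrywise (Hadamard) products satisfy the triangle-type inequality d_H(x ∘ u, y ∘ w) ≤ d_H(x, y) + d_H(u, w), where (x ∘ u)_i = x_i · u_i. -/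
open Finset Real

/-- the Hilbert projective metric satisfies the triangle-type inequality for
entrywise (Hadamard) products of strictly positive vectors:
`d_H(x ∘ u, y ∘ w) ≤ d_H(x, y) + d_H(u, w)` where `(x ∘ u) i = x i * u i`. -/
theorem dH_mul_le {ι : Type*} [Fintype ι] [Nonempty ι]
    (x y u w : ι → ℝ) (hx : ∀ i, 0 < x i) (hy : ∀ i, 0 < y i)
    (hu : ∀ i, 0 < u i) (hw : ∀ i, 0 < w i) :
    dH (fun i => x i * u i) (fun i => y i * w i) ≤ dH x y + dH u w := by
  have hxy : ∀ i, 0 < x i / y i := fun i => div_pos (hx i) (hy i)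
  have huw : ∀ i, 0 < u i / w i := fun i => div_pos (hu i) (hw i)
  have hpos : ∀ i, 0 < (x i * u i) / (y i * w i) :=
    fun i => div_pos (mul_pos (hx i) (hu i)) (mul_pos (hy i) (hw i))
  have key : ∀ i, (x i * u i) / (y i * w i) = (x i / y i) * (u i / w i) := by
    intro i; rw [div_mul_div_comm]
  obtain ⟨i₀⟩ := ‹Nonempty ι›
  -- positivity / bounds for sups
  have hS1pos : 0 < ⨆ i, x i / y i :=
    lt_of_lt_of_le (hxy i₀) (le_ciSup (f := fun i => x i / y i) (Set.Finite.bddAbove (Set.finite_range _)) i₀)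
  have hS2pos : 0 < ⨆ i, u i / w i :=
    lt_of_lt_of_le (huw i₀) (le_ciSup (f := fun i => u i / w i) (Set.Finite.bddAbove (Set.finite_range _)) i₀)
  have hSpos : 0 < ⨆ i, (x i * u i) / (y i * w i) :=
    lt_of_lt_of_le (hpos i₀) (le_ciSup (f := fun i => (x i * u i) / (y i * w i)) (Set.Finite.bddAbove (Set.finite_range _)) i₀)
  -- positivity for infs
  have hI1pos : 0 < ⨅ i, x i / y i := by
    obtain ⟨j, hj⟩ := Finite.exists_min fun i => x i / y i
    exact lt_of_lt_of_le (hxy j) (le_ciInf hj)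
  have hI2pos : 0 < ⨅ i, u i / w i := by
    obtain ⟨j, hj⟩ := Finite.exists_min fun i => u i / w i
    exact lt_of_lt_of_le (huw j) (le_ciInf hj)
  have hIpos : 0 < ⨅ i, (x i * u i) / (y i * w i) := by
    obtain ⟨j, hj⟩ := Finite.exists_min fun i => (x i * u i) / (y i * w i)
    exact lt_of_lt_of_le (hpos j) (le_ciInf hj)
  -- sup inequality
  have hsup : (⨆ i, (x i * u i) / (y i * w i)) ≤ (⨆ i, x i / y i) * ⨆ i, u i / w i := by
    refine ciSup_le fun i => ?_
    rw [key i]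
    exact mul_le_mul (le_ciSup (f := fun i => x i / y i) (Set.Finite.bddAbove (Set.finite_range _)) i)
      (le_ciSup (f := fun i => u i / w i) (Set.Finite.bddAbove (Set.finite_range _)) i) (huw i).le hS1pos.le
  -- inf inequality
  have hinf : (⨅ i, x i / y i) * (⨅ i, u i / w i) ≤ ⨅ i, (x i * u i) / (y i * w i) := by
    refine le_ciInf fun i => ?_
    rw [key i]
    exact mul_le_mul (ciInf_le (f := fun i => x i / y i) (Set.Finite.bddBelow (Set.finite_range _)) i)
      (ciInf_le (f := fun i => u i / w i) (Set.Finite.bddBelow (Set.finite_range _)) i) hI2pos.le (hxy i).le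
  unfold dH
  have h1 : Real.log (⨆ i, (x i * u i) / (y i * w i)) ≤
      Real.log (⨆ i, x i / y i) + Real.log (⨆ i, u i / w i) := by
    rw [← Real.log_mul hS1pos.ne' hS2pos.ne']
    exact Real.log_le_log hSpos hsup
  have h2 : Real.log (⨅ i, x i / y i) + Real.log (⨅ i, u i / w i) ≤
      Real.log (⨅ i, (x i * u i) / (y i * w i)) := by
    rw [← Real.log_mul hI1pos.ne' hI2pos.ne']
    exact Real.log_le_log (mul_pos hI1pos hI2pos) hinf
  linarith
end
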